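/- arXiv:1006.1407 — 4 statements merged into one kernel-verified Lean document; each statement's English description precedes it below -/
import Mathlib

section
/- An ABB̄L̄-formula φ is satisfied by some interval structure over a strongly discrete linear order if and only if φ is featured by some consistent and fulfilling compass φ-structure over a strongly discrete linear order. -/
namespace ABBL

/-- Formulas of the interval temporal logic ABB̄L̄, built from propositional
variables (of type `P`) using negation, disjunction and the unary modal
operators ⟨A⟩, ⟨B⟩, ⟨B̄⟩, ⟨L̄⟩. -/
inductive Formula (P : Type) : Type
  | atom  : P → Formula P
  | neg   : Formula P → Formula P
  | or    : Formula P → Formula P → Formula P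
  | diaA  : Formula P → Formula P
  | diaB  : Formula P → Formula P
  | diaBb : Formula P → Formula P
  | diaLb : Formula P → Formula P

variable {P : Type}

/-- The set of subformulas of a formula. -/
def subf : Formula P → Set (Formula P)
  | .atom a   => {Formula.atom a}
  | .neg ψ    => insert (Formula.neg ψ) (subf ψ)
  | .or ψ χ   => insert (Formula.or ψ χ) (subf ψ ∪ subf χ)
  | .diaA ψ   => insert (Formula.diaA ψ) (subf ψ)
  | .diaB ψ   => insert (Formula.diaB ψ) (subf ψ)
  | .diaBb ψ  => insert (Formula.diaBb ψ) (subf ψ)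
  | .diaLb ψ  => insert (Formula.diaLb ψ) (subf ψ)

/-- The number `|φ|` of subformulas of `φ`. -/
noncomputable def numSub (φ : Formula P) : ℕ := (subf φ).ncard

/-- Negation, identifying `¬¬α` with `α`. -/
def negc : Formula P → Formula P
  | .neg ψ => ψ
  | ψ      => Formula.neg ψ

/-- The closure `Cl(φ)`: all subformulas of `φ` and their negations. -/
def Cl (φ : Formula P) : Set (Formula P) := subf φ ∪ negc '' subf φ

/-- The extended closure `Cl⁺(φ)`: `Cl(φ)` together with all formulas
`⟨R⟩α` and `¬⟨R⟩α` for `R ∈ {A,B,B̄,L̄}` and `α ∈ Cl(φ)`. -/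
def Clp (φ : Formula P) : Set (Formula P) :=
  Cl φ ∪ {ψ | ∃ α ∈ Cl φ,
    ψ = Formula.diaA α ∨ ψ = Formula.neg (Formula.diaA α) ∨
    ψ = Formula.diaB α ∨ ψ = Formula.neg (Formula.diaB α) ∨
    ψ = Formula.diaBb α ∨ ψ = Formula.neg (Formula.diaBb α) ∨
    ψ = Formula.diaLb α ∨ ψ = Formula.neg (Formula.diaLb α)}

/-- A `φ`-atom: a nonempty, maximal locally consistent subset of `Cl⁺(φ)`. -/
structure IsAtom (φ : Formula P) (F : Set (Formula P)) : Prop where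
  nonempty : F.Nonempty
  subset   : F ⊆ Clp φ
  negCond  : ∀ α ∈ Clp φ, (α ∈ F ↔ negc α ∉ F)
  orCond   : ∀ α β, Formula.or α β ∈ Clp φ → (Formula.or α β ∈ F ↔ α ∈ F ∨ β ∈ F)

/-- The observables of `F`: `Obs(F) = F ∩ Cl(φ)`. -/
def Obs (φ : Formula P) (F : Set (Formula P)) : Set (Formula P) := F ∩ Cl φ

/-- The `A`-requests of `F`. -/
def ReqA (φ : Formula P) (F : Set (Formula P)) : Set (Formula P) :=
  {α | α ∈ Cl φ ∧ Formula.diaA α ∈ F}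

/-- The `B`-requests of `F`. -/
def ReqB (φ : Formula P) (F : Set (Formula P)) : Set (Formula P) :=
  {α | α ∈ Cl φ ∧ Formula.diaB α ∈ F}

/-- The `B̄`-requests of `F`. -/
def ReqBb (φ : Formula P) (F : Set (Formula P)) : Set (Formula P) :=
  {α | α ∈ Cl φ ∧ Formula.diaBb α ∈ F}

/-- The `L̄`-requests of `F`. -/
def ReqLb (φ : Formula P) (F : Set (Formula P)) : Set (Formula P) :=
  {α | α ∈ Cl φ ∧ Formula.diaLb α ∈ F}

/-- The dependency relation `F →_A G`. -/
def DepA (φ : Formula P) (F G : Set (Formula P)) : Prop :=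
  ReqA φ F = Obs φ G ∪ ReqB φ G ∪ ReqBb φ G

/-- The dependency relation `F →_B G`. -/
def DepB (φ : Formula P) (F G : Set (Formula P)) : Prop :=
  (Obs φ F ∪ ReqBb φ F ⊆ ReqBb φ G) ∧
  (ReqBb φ G ⊆ Obs φ F ∪ ReqBb φ F ∪ ReqB φ F) ∧
  (Obs φ G ∪ ReqB φ G ⊆ ReqB φ F) ∧
  (ReqB φ F ⊆ Obs φ G ∪ ReqB φ G ∪ ReqBb φ G) ∧
  ReqLb φ F = ReqLb φ G

/-- The dependency relation `F →_L̄ G`. -/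
def DepLb (φ : Formula P) (F G : Set (Formula P)) : Prop :=
  Obs φ G ∪ ReqLb φ G ⊆ ReqLb φ F

/-! ### Interval structures and semantics -/

/-- Intervals `[x,y]` with `x < y` over a linear order `O`. -/
def Interval (O : Type) [LinearOrder O] : Type := {p : O × O // p.1 < p.2}

variable {O : Type} [LinearOrder O]

/-- Allen's "meets" relation: `[x,y] A [x',y']` iff `y = x'`. -/
def relA (I J : Interval O) : Prop := I.1.2 = J.1.1

/-- Allen's "begins" relation: `[x,y] B [x',y']` iff `x = x'` and `y' < y`. -/
def relB (I J : Interval O) : Prop := I.1.1 = J.1.1 ∧ J.1.2 < I.1.2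

/-- Allen's "begun by" relation: `[x,y] B̄ [x',y']` iff `x = x'` and `y < y'`. -/
def relBb (I J : Interval O) : Prop := I.1.1 = J.1.1 ∧ I.1.2 < J.1.2

/-- Allen's "before" relation: `[x,y] L̄ [x',y']` iff `y' < x`. -/
def relLb (I J : Interval O) : Prop := J.1.2 < I.1.1

/-- Satisfaction of a formula at an interval of an interval structure
`S = (I_O, σ)`, where `σ` is the labeling with sets of propositional variables. -/
def sat (σ : Interval O → Set P) : Formula P → Interval O → Prop
  | .atom a, I  => a ∈ σ I
  | .neg ψ, I   => ¬ sat σ ψ I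
  | .or ψ χ, I  => sat σ ψ I ∨ sat σ χ I
  | .diaA ψ, I  => ∃ J, relA I J ∧ sat σ ψ J
  | .diaB ψ, I  => ∃ J, relB I J ∧ sat σ ψ J
  | .diaBb ψ, I => ∃ J, relBb I J ∧ sat σ ψ J
  | .diaLb ψ, I => ∃ J, relLb I J ∧ sat σ ψ J

/-- A linear order is strongly discrete iff there are only finitely many
points between any two points. -/
def StronglyDiscrete (O : Type) [LinearOrder O] : Prop :=
  ∀ x y : O, (Set.Ioo x y).Finite

/-- The `φ`-type of an interval: the set of formulas of `Cl⁺(φ)` true at it. -/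
def TypeS (σ : Interval O → Set P) (φ : Formula P) (I : Interval O) : Set (Formula P) :=
  {α | α ∈ Clp φ ∧ sat σ α I}

/-! ### Compass structures over a linear order -/

/-- A (consistent and fulfilling) compass `φ`-structure over a linear order `O`:
a labeling of the points `(x,y)` with `x < y` (identified with intervals) by
`φ`-atoms, satisfying consistency and fulfillment. -/
structure IsCompass (φ : Formula P) (L : Interval O → Set (Formula P)) : Prop where
  isAtom : ∀ p, IsAtom φ (L p)
  consA  : ∀ p q, relA p q → DepA φ (L p) (L q)
  consB  : ∀ p q, relB p q → DepB φ (L p) (L q)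
  consLb : ∀ p q, relLb p q → DepLb φ (L p) (L q)
  fulA   : ∀ p, ∀ α ∈ ReqA φ (L p), ∃ q, relA p q ∧ α ∈ Obs φ (L q)
  fulB   : ∀ p, ∀ α ∈ ReqB φ (L p), ∃ q, relB p q ∧ α ∈ Obs φ (L q)
  fulBb  : ∀ p, ∀ α ∈ ReqBb φ (L p), ∃ q, relBb p q ∧ α ∈ Obs φ (L q)
  fulLb  : ∀ p, ∀ α ∈ ReqLb φ (L p), ∃ q, relLb p q ∧ α ∈ Obs φ (L q)

/-! ### Finite compass structures, over `O = {0,…,N−1}` -/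

/-- A finite compass structure of size `N` (consistency conditions only):
the points are the pairs `(x,y)` with `x < y < N`, and `L` gives the labeling
by `φ`-atoms. Consistency is required for the relations `A`, `B`, `L̄`. -/
structure IsPreCompass (φ : Formula P) (N : ℕ) (L : ℕ → ℕ → Set (Formula P)) : Prop where
  isAtom : ∀ x y, x < y → y < N → IsAtom φ (L x y)
  consA  : ∀ x y z, x < y → y < z → z < N → DepA φ (L x y) (L y z)
  consB  : ∀ x z y, x < z → z < y → y < N → DepB φ (L x y) (L x z)
  consLb : ∀ u v x y, u < v → v < x → x < y → y < N → DepLb φ (L x y) (L u v)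

/-- A (consistent and fulfilling) finite compass `φ`-structure of size `N`. -/
structure IsFinCompass (φ : Formula P) (N : ℕ) (L : ℕ → ℕ → Set (Formula P))
    extends IsPreCompass φ N L : Prop where
  fulA  : ∀ x y, x < y → y < N → ∀ α ∈ ReqA φ (L x y),
            ∃ z, y < z ∧ z < N ∧ α ∈ Obs φ (L y z)
  fulB  : ∀ x y, x < y → y < N → ∀ α ∈ ReqB φ (L x y),
            ∃ z, x < z ∧ z < y ∧ α ∈ Obs φ (L x z)
  fulBb : ∀ x y, x < y → y < N → ∀ α ∈ ReqBb φ (L x y),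
            ∃ z, y < z ∧ z < N ∧ α ∈ Obs φ (L x z)
  fulLb : ∀ x y, x < y → y < N → ∀ α ∈ ReqLb φ (L x y),
            ∃ u v, u < v ∧ v < x ∧ α ∈ Obs φ (L u v)

/-- The shading of row `y`: the set of atoms occurring on row `y`. -/
def Shading (L : ℕ → ℕ → Set (Formula P)) (y : ℕ) : Set (Set (Formula P)) :=
  {F | ∃ x, x < y ∧ L x y = F}

/-- The property (WIT) of a set of points `W` being a witness set for row `y`:
every `ψ ∈ Cl(φ)` appearing in the label of a point above row `y` has a witness
in `W` at minimal height above `y`. -/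
def WitProp (φ : Formula P) (N : ℕ) (L : ℕ → ℕ → Set (Formula P)) (y : ℕ)
    (W : Set (ℕ × ℕ)) : Prop :=
  (∀ p ∈ W, p.1 < p.2 ∧ p.2 < N ∧ y < p.2) ∧
  ∀ ψ ∈ Cl φ, (∃ x' y', x' < y' ∧ y' < N ∧ y < y' ∧ ψ ∈ L x' y') →
    ∃ p ∈ W, ψ ∈ L p.1 p.2 ∧
      ∀ x' y', x' < y' → y' < N → y < y' → y' < p.2 → negc ψ ∈ L x' y'

/-- A witness set for row `y`: a minimal set satisfying (WIT). -/
def IsWitSet (φ : Formula P) (N : ℕ) (L : ℕ → ℕ → Set (Formula P)) (y : ℕ)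
    (W : Set (ℕ × ℕ)) : Prop :=
  WitProp φ N L y W ∧ ∀ W' ⊆ W, WitProp φ N L y W' → W' = W

/-- `π_ȳ(S)`: the `x`-coordinates, smaller than `ȳ`, of the points in `S`. -/
def proj (ybar : ℕ) (S : Set (ℕ × ℕ)) : Set ℕ := {x | (∃ y, (x, y) ∈ S) ∧ x < ybar}

/-- Two rows `y0 < y1` of a finite compass structure are compatible. -/
def Compatible (φ : Formula P) (N : ℕ) (L : ℕ → ℕ → Set (Formula P))
    (y0 y1 : ℕ) : Prop :=
  Shading L y0 = Shading L y1 ∧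
  L (y0 - 1) y0 = L (y1 - 1) y1 ∧
  ∃ W, IsWitSet φ N L y1 W ∧
    ∃ w : ℕ → ℕ, Set.InjOn w (proj y1 W) ∧
      ∀ x ∈ proj y1 W, w x < y0 ∧ L x y1 = L (w x) y0

/-- `#(F,y)`: the number of points on row `y` labeled by `F`. -/
noncomputable def cnt (L : ℕ → ℕ → Set (Formula P)) (y : ℕ) (F : Set (Formula P)) : ℕ :=
  Set.ncard {x | x < y ∧ L x y = F}

/-- The characteristic function of row `y`: counts occurrences of each atom,
capped at `2|φ|`. -/
noncomputable def charFn (φ : Formula P) (L : ℕ → ℕ → Set (Formula P)) (y : ℕ)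
    (F : Set (Formula P)) : ℕ :=
  min (cnt L y F) (2 * numSub φ)

/-- The formula `ξ = φ ∨ ⟨B̄⟩φ ∨ ⟨A⟩φ ∨ ⟨A⟩⟨A⟩φ`. -/
def xi (φ : Formula P) : Formula P :=
  Formula.or (Formula.or (Formula.or φ (Formula.diaBb φ)) (Formula.diaA φ))
    (Formula.diaA (Formula.diaA φ))

/-! ### Partially fulfilling structures and compass generators -/

/-- A finite compass structure of size `N` is partially fulfilling: every
request of a point strictly below the top row `N-1` is either fulfilled or
transferred to the border. -/
def PartFulfilling (φ : Formula P) (N : ℕ) (L : ℕ → ℕ → Set (Formula P)) : Prop :=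
  ∀ x y, x < y → y < N - 1 →
    (∀ ψ ∈ ReqA φ (L x y),
        (∃ z, y < z ∧ z < N ∧ ψ ∈ Obs φ (L y z)) ∨ ψ ∈ ReqBb φ (L y (N - 1))) ∧
    (∀ ψ ∈ ReqB φ (L x y), ∃ z, x < z ∧ z < y ∧ ψ ∈ Obs φ (L x z)) ∧
    (∀ ψ ∈ ReqBb φ (L x y),
        (∃ z, y < z ∧ z < N ∧ ψ ∈ Obs φ (L x z)) ∨ ψ ∈ ReqBb φ (L x (N - 1))) ∧
    (∀ ψ ∈ ReqLb φ (L x y),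
        (∃ u v, u < v ∧ v < x ∧ ψ ∈ Obs φ (L u v)) ∨ ψ ∈ ReqLb φ (L 0 1))

/-- The defining property of a future witness set for row `y`. -/
def FutWitProp (φ : Formula P) (N : ℕ) (L : ℕ → ℕ → Set (Formula P)) (y : ℕ)
    (FW : Set ℕ) : Prop :=
  (∀ x ∈ FW, x < y) ∧
  ∀ F ∈ Shading L y, ∃ x ∈ FW, L x y = F ∧
    ∀ ψ ∈ ReqBb φ F, ∃ y', y < y' ∧ y' < N ∧ ψ ∈ Obs φ (L x y')

/-- A future witness set for row `y`: a minimal set satisfying `FutWitProp`. -/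
def IsFutWit (φ : Formula P) (N : ℕ) (L : ℕ → ℕ → Set (Formula P)) (y : ℕ)
    (FW : Set ℕ) : Prop :=
  FutWitProp φ N L y FW ∧ ∀ FW' ⊆ FW, FutWitProp φ N L y FW' → FW' = FW

/-- The defining property of a past witness set for row `y`. -/
def PastWitProp (φ : Formula P) (N : ℕ) (L : ℕ → ℕ → Set (Formula P)) (y : ℕ)
    (PW : Set (ℕ × ℕ)) : Prop :=
  (∀ p ∈ PW, p.1 < p.2 ∧ p.2 < N) ∧
  ∀ ψ ∈ ReqLb φ (L (y - 1) y), ∃ p ∈ PW, ψ ∈ Obs φ (L p.1 p.2) ∧ p.2 < y - 1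

/-- A past witness set for row `y`: a minimal set satisfying `PastWitProp`. -/
def IsPastWit (φ : Formula P) (N : ℕ) (L : ℕ → ℕ → Set (Formula P)) (y : ℕ)
    (PW : Set (ℕ × ℕ)) : Prop :=
  PastWitProp φ N L y PW ∧ ∀ PW' ⊆ PW, PastWitProp φ N L y PW' → PW' = PW

/-- Conditions (G1)–(G6) on the four distinguished rows of a compass generator. -/
structure GenRows (φ : Formula P) (N : ℕ) (L : ℕ → ℕ → Set (Formula P))
    (yφ y0 y1 y2 : ℕ) : Prop where
  rowφpos : 0 < yφ
  rowφlt  : yφ < N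
  row0pos : 0 < y0
  row2lt  : y2 < N
  g1a : y0 < y1
  g1b : y1 < y2
  g1c : y0 ≤ yφ
  g2  : φ ∈ L (yφ - 1) yφ ∨ Formula.diaBb φ ∈ L (yφ - 1) yφ
  g3a : Shading L y1 ⊆ Shading L y0
  g3b : L (y0 - 1) y0 = L (y1 - 1) y1
  g4  : ∃ PW, IsPastWit φ N L y1 PW ∧ ∀ x ∈ proj y1 PW, y0 ≤ x
  g5a : Shading L (N - 1) ⊆ Shading L y2
  g5b : L (y2 - 1) y2 = L (N - 2) (N - 1)
  g6  : ∃ FW, IsFutWit φ N L y2 FW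

/-- A compass generator for `φ`: a finite, partially fulfilling compass
structure admitting four rows satisfying (G1)–(G6). -/
structure IsCompassGen (φ : Formula P) (N : ℕ) (L : ℕ → ℕ → Set (Formula P)) : Prop where
  pre     : IsPreCompass φ N L
  partFul : PartFulfilling φ N L
  rows    : ∃ yφ y0 y1 y2, GenRows φ N L yφ y0 y1 y2

/-- Global compatibility of two rows `y < y'` of a compass generator with
distinguished rows `yφ, y0, y1, y2`. -/
def GlobCompatible (φ : Formula P) (N : ℕ) (L : ℕ → ℕ → Set (Formula P))
    (yφ y0 y1 y2 y y' : ℕ) : Prop :=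
  L (y - 1) y = L (y' - 1) y' ∧ Shading L y = Shading L y' ∧
  (∀ ybar ∈ ({yφ, y0, y1, y2} : Set ℕ), ¬ (y ≤ ybar ∧ ybar ≤ y')) ∧
  ∃ PW FW,
    IsPastWit φ N L y1 PW ∧
    (∀ p ∈ PW, ¬ (y ≤ p.2 ∧ p.2 ≤ y')) ∧
    IsFutWit φ N L y2 FW ∧
    (∀ xbar ∈ FW, ∀ ψ ∈ ReqBb φ (L xbar y2),
      ∃ ybar, y2 < ybar ∧ ybar < N ∧ ψ ∈ Obs φ (L xbar ybar) ∧ ¬ (y ≤ ybar ∧ ybar ≤ y')) ∧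
    ∃ W, IsWitSet φ N L y' W ∧
      ∃ w : ℕ → ℕ,
        Set.InjOn w (proj y' (W ∪ PW ∪ (fun x => (x, y2)) '' FW)) ∧
        (∀ x ∈ proj y' (W ∪ PW ∪ (fun x => (x, y2)) '' FW),
          w x < y ∧ L x y' = L (w x) y) ∧
        (∀ x ∈ proj y' PW, w x = x)


/-! ### Auxiliary lemmas for Statement 1 -/

section Aux

@[simp] lemma mem_subf_self (φ : Formula P) : φ ∈ subf φ := by
  cases φ <;> simp [subf]

lemma subf_subset {φ : Formula P} : ∀ {ψ : Formula P}, ψ ∈ subf φ → subf ψ ⊆ subf φ := by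
  induction φ with
  | atom a =>
      intro ψ h
      simp only [subf, Set.mem_singleton_iff] at h
      subst h; simp [subf]
  | neg χ ih =>
      intro ψ h
      simp only [subf, Set.mem_insert_iff] at h
      rcases h with rfl | h
      · exact subset_rfl
      · exact (ih h).trans (Set.subset_insert _ _)
  | or χ ρ ih1 ih2 =>
      intro ψ h
      simp only [subf, Set.mem_insert_iff, Set.mem_union] at h
      rcases h with rfl | h | h
      · exact subset_rfl
      · exact (ih1 h).trans ((Set.subset_union_left).trans (Set.subset_insert _ _))
      · exact (ih2 h).trans ((Set.subset_union_right).trans (Set.subset_insert _ _))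
  | diaA χ ih =>
      intro ψ h
      simp only [subf, Set.mem_insert_iff] at h
      rcases h with rfl | h
      · exact subset_rfl
      · exact (ih h).trans (Set.subset_insert _ _)
  | diaB χ ih =>
      intro ψ h
      simp only [subf, Set.mem_insert_iff] at h
      rcases h with rfl | h
      · exact subset_rfl
      · exact (ih h).trans (Set.subset_insert _ _)
  | diaBb χ ih =>
      intro ψ h
      simp only [subf, Set.mem_insert_iff] at h
      rcases h with rfl | h
      · exact subset_rfl
      · exact (ih h).trans (Set.subset_insert _ _)
  | diaLb χ ih =>
      intro ψ h
      simp only [subf, Set.mem_insert_iff] at h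
      rcases h with rfl | h
      · exact subset_rfl
      · exact (ih h).trans (Set.subset_insert _ _)

lemma subf_subset_Cl (φ : Formula P) : subf φ ⊆ Cl φ := Set.subset_union_left

lemma Cl_subset_Clp (φ : Formula P) : Cl φ ⊆ Clp φ := Set.subset_union_left

@[simp] lemma negc_neg (ψ : Formula P) : negc (Formula.neg ψ) = ψ := rfl
@[simp] lemma negc_atom (a : P) : negc (Formula.atom a) = Formula.neg (Formula.atom a) := rfl
@[simp] lemma negc_or (α β : Formula P) :
    negc (Formula.or α β) = Formula.neg (Formula.or α β) := rfl
@[simp] lemma negc_diaA (ψ : Formula P) :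
    negc (Formula.diaA ψ) = Formula.neg (Formula.diaA ψ) := rfl
@[simp] lemma negc_diaB (ψ : Formula P) :
    negc (Formula.diaB ψ) = Formula.neg (Formula.diaB ψ) := rfl
@[simp] lemma negc_diaBb (ψ : Formula P) :
    negc (Formula.diaBb ψ) = Formula.neg (Formula.diaBb ψ) := rfl
@[simp] lemma negc_diaLb (ψ : Formula P) :
    negc (Formula.diaLb ψ) = Formula.neg (Formula.diaLb ψ) := rfl

lemma Cl_cases {φ α : Formula P} (h : α ∈ Cl φ) :
    α ∈ subf φ ∨ ∃ ψ ∈ subf φ, α = Formula.neg ψ := by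
  rcases h with h | ⟨χ, hχ, rfl⟩
  · exact Or.inl h
  · cases χ with
    | neg ρ => exact Or.inl (subf_subset hχ (by simp [subf]))
    | atom a => exact Or.inr ⟨_, hχ, rfl⟩
    | or α β => exact Or.inr ⟨_, hχ, rfl⟩
    | diaA ψ => exact Or.inr ⟨_, hχ, rfl⟩
    | diaB ψ => exact Or.inr ⟨_, hχ, rfl⟩
    | diaBb ψ => exact Or.inr ⟨_, hχ, rfl⟩
    | diaLb ψ => exact Or.inr ⟨_, hχ, rfl⟩

lemma neg_mem_of_Cl {φ ψ : Formula P} (h : Formula.neg ψ ∈ Cl φ) : ψ ∈ subf φ := by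
  rcases Cl_cases h with h | ⟨χ, hχ, hc⟩
  · exact subf_subset h (by simp [subf])
  · injection hc with hc; exact hc ▸ hχ

lemma or_mem_of_Cl {φ α β : Formula P} (h : Formula.or α β ∈ Cl φ) :
    α ∈ subf φ ∧ β ∈ subf φ := by
  have h2 : Formula.or α β ∈ subf φ := by
    rcases Cl_cases h with h | ⟨χ, hχ, hc⟩
    · exact h
    · cases hc
  exact ⟨subf_subset h2 (by simp [subf]), subf_subset h2 (by simp [subf])⟩

lemma diaA_mem_of_Cl {φ ψ : Formula P} (h : Formula.diaA ψ ∈ Cl φ) : ψ ∈ subf φ := by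
  rcases Cl_cases h with h | ⟨χ, hχ, hc⟩
  · exact subf_subset h (by simp [subf])
  · cases hc

lemma diaB_mem_of_Cl {φ ψ : Formula P} (h : Formula.diaB ψ ∈ Cl φ) : ψ ∈ subf φ := by
  rcases Cl_cases h with h | ⟨χ, hχ, hc⟩
  · exact subf_subset h (by simp [subf])
  · cases hc

lemma diaBb_mem_of_Cl {φ ψ : Formula P} (h : Formula.diaBb ψ ∈ Cl φ) : ψ ∈ subf φ := by
  rcases Cl_cases h with h | ⟨χ, hχ, hc⟩
  · exact subf_subset h (by simp [subf])
  · cases hc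

lemma diaLb_mem_of_Cl {φ ψ : Formula P} (h : Formula.diaLb ψ ∈ Cl φ) : ψ ∈ subf φ := by
  rcases Cl_cases h with h | ⟨χ, hχ, hc⟩
  · exact subf_subset h (by simp [subf])
  · cases hc

lemma diaA_mem_Clp {φ ψ : Formula P} (h : ψ ∈ Cl φ) : Formula.diaA ψ ∈ Clp φ :=
  Or.inr ⟨ψ, h, by simp⟩

lemma diaB_mem_Clp {φ ψ : Formula P} (h : ψ ∈ Cl φ) : Formula.diaB ψ ∈ Clp φ :=
  Or.inr ⟨ψ, h, by simp⟩

lemma diaBb_mem_Clp {φ ψ : Formula P} (h : ψ ∈ Cl φ) : Formula.diaBb ψ ∈ Clp φ :=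
  Or.inr ⟨ψ, h, by simp⟩

lemma diaLb_mem_Clp {φ ψ : Formula P} (h : ψ ∈ Cl φ) : Formula.diaLb ψ ∈ Clp φ :=
  Or.inr ⟨ψ, h, by simp⟩

lemma neg_mem_Clp_elim {φ ψ : Formula P} (h : Formula.neg ψ ∈ Clp φ) : ψ ∈ Clp φ := by
  rcases h with h | ⟨α, hα, hc⟩
  · exact Cl_subset_Clp φ (subf_subset_Cl φ (neg_mem_of_Cl h))
  · rcases hc with hc | hc | hc | hc | hc | hc | hc | hc <;>
      first
        | (injection hc with hc; subst hc; exact Or.inr ⟨α, hα, by simp⟩)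
        | cases hc

lemma or_mem_Clp_elim {φ α β : Formula P} (h : Formula.or α β ∈ Clp φ) :
    α ∈ Clp φ ∧ β ∈ Clp φ := by
  rcases h with h | ⟨χ, hχ, hc⟩
  · obtain ⟨h1, h2⟩ := or_mem_of_Cl h
    exact ⟨Cl_subset_Clp φ (subf_subset_Cl φ h1), Cl_subset_Clp φ (subf_subset_Cl φ h2)⟩
  · rcases hc with hc | hc | hc | hc | hc | hc | hc | hc <;> cases hc

lemma diaA_mem_Clp_elim {φ ψ : Formula P} (h : Formula.diaA ψ ∈ Clp φ) : ψ ∈ Cl φ := by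
  rcases h with h | ⟨α, hα, hc⟩
  · exact subf_subset_Cl φ (diaA_mem_of_Cl h)
  · rcases hc with hc | hc | hc | hc | hc | hc | hc | hc <;>
      first
        | (injection hc with hc; subst hc; exact hα)
        | cases hc

lemma diaB_mem_Clp_elim {φ ψ : Formula P} (h : Formula.diaB ψ ∈ Clp φ) : ψ ∈ Cl φ := by
  rcases h with h | ⟨α, hα, hc⟩
  · exact subf_subset_Cl φ (diaB_mem_of_Cl h)
  · rcases hc with hc | hc | hc | hc | hc | hc | hc | hc <;>
      first
        | (injection hc with hc; subst hc; exact hα)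
        | cases hc

lemma diaBb_mem_Clp_elim {φ ψ : Formula P} (h : Formula.diaBb ψ ∈ Clp φ) : ψ ∈ Cl φ := by
  rcases h with h | ⟨α, hα, hc⟩
  · exact subf_subset_Cl φ (diaBb_mem_of_Cl h)
  · rcases hc with hc | hc | hc | hc | hc | hc | hc | hc <;>
      first
        | (injection hc with hc; subst hc; exact hα)
        | cases hc

lemma diaLb_mem_Clp_elim {φ ψ : Formula P} (h : Formula.diaLb ψ ∈ Clp φ) : ψ ∈ Cl φ := by
  rcases h with h | ⟨α, hα, hc⟩
  · exact subf_subset_Cl φ (diaLb_mem_of_Cl h)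
  · rcases hc with hc | hc | hc | hc | hc | hc | hc | hc <;>
      first
        | (injection hc with hc; subst hc; exact hα)
        | cases hc

lemma negc_mem_Clp {φ α : Formula P} (h : α ∈ Clp φ) : negc α ∈ Clp φ := by
  rcases h with h | ⟨β, hβ, hc⟩
  · rcases Cl_cases h with h | ⟨ψ, hψ, rfl⟩
    · exact Or.inl (Or.inr ⟨α, h, rfl⟩)
    · exact Or.inl (Or.inl hψ)
  · rcases hc with rfl | rfl | rfl | rfl | rfl | rfl | rfl | rfl <;>
      exact Or.inr ⟨β, hβ, by simp⟩

lemma sat_negc {O : Type} [LinearOrder O] (σ : Interval O → Set P) (α : Formula P)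
    (I : Interval O) : sat σ (negc α) I ↔ ¬ sat σ α I := by
  cases α <;> simp [negc, sat]

lemma phi_mem_Clp (φ : Formula P) : φ ∈ Clp φ :=
  Cl_subset_Clp φ (subf_subset_Cl φ (mem_subf_self φ))

/-! #### Types of intervals -/

variable {O : Type} [LinearOrder O] {σ : Interval O → Set P} {φ α : Formula P} {I : Interval O}

lemma mem_Obs_TypeS : α ∈ Obs φ (TypeS σ φ I) ↔ α ∈ Cl φ ∧ sat σ α I := by
  constructor
  · rintro ⟨⟨_, hs⟩, hcl⟩; exact ⟨hcl, hs⟩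
  · rintro ⟨hcl, hs⟩; exact ⟨⟨Cl_subset_Clp φ hcl, hs⟩, hcl⟩

lemma mem_ReqA_TypeS : α ∈ ReqA φ (TypeS σ φ I) ↔ α ∈ Cl φ ∧ ∃ J, relA I J ∧ sat σ α J := by
  constructor
  · rintro ⟨hcl, _, hs⟩; exact ⟨hcl, hs⟩
  · rintro ⟨hcl, hs⟩; exact ⟨hcl, diaA_mem_Clp hcl, hs⟩

lemma mem_ReqB_TypeS : α ∈ ReqB φ (TypeS σ φ I) ↔ α ∈ Cl φ ∧ ∃ J, relB I J ∧ sat σ α J := by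
  constructor
  · rintro ⟨hcl, _, hs⟩; exact ⟨hcl, hs⟩
  · rintro ⟨hcl, hs⟩; exact ⟨hcl, diaB_mem_Clp hcl, hs⟩

lemma mem_ReqBb_TypeS : α ∈ ReqBb φ (TypeS σ φ I) ↔ α ∈ Cl φ ∧ ∃ J, relBb I J ∧ sat σ α J := by
  constructor
  · rintro ⟨hcl, _, hs⟩; exact ⟨hcl, hs⟩
  · rintro ⟨hcl, hs⟩; exact ⟨hcl, diaBb_mem_Clp hcl, hs⟩

lemma mem_ReqLb_TypeS : α ∈ ReqLb φ (TypeS σ φ I) ↔ α ∈ Cl φ ∧ ∃ J, relLb I J ∧ sat σ α J := by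
  constructor
  · rintro ⟨hcl, _, hs⟩; exact ⟨hcl, hs⟩
  · rintro ⟨hcl, hs⟩; exact ⟨hcl, diaLb_mem_Clp hcl, hs⟩

lemma isAtom_TypeS (σ : Interval O → Set P) (φ : Formula P) (I : Interval O) :
    IsAtom φ (TypeS σ φ I) where
  nonempty := by
    by_cases h : sat σ φ I
    · exact ⟨φ, phi_mem_Clp φ, h⟩
    · exact ⟨negc φ, negc_mem_Clp (phi_mem_Clp φ), (sat_negc σ φ I).mpr h⟩
  subset := fun α hα => hα.1
  negCond := by
    intro α hα
    constructor
    · rintro ⟨_, hs⟩ ⟨_, hns⟩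
      exact ((sat_negc σ α I).mp hns) hs
    · intro h
      refine ⟨hα, ?_⟩
      by_contra hs
      exact h ⟨negc_mem_Clp hα, (sat_negc σ α I).mpr hs⟩
  orCond := by
    intro α β h
    obtain ⟨hα, hβ⟩ := or_mem_Clp_elim h
    constructor
    · rintro ⟨_, hs | hs⟩
      · exact Or.inl ⟨hα, hs⟩
      · exact Or.inr ⟨hβ, hs⟩
    · rintro (⟨_, hs⟩ | ⟨_, hs⟩)
      · exact ⟨h, Or.inl hs⟩
      · exact ⟨h, Or.inr hs⟩

lemma interval_eq {I J : Interval O} (h1 : I.1.1 = J.1.1) (h2 : I.1.2 = J.1.2) : I = J :=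
  Subtype.ext (Prod.ext_iff.mpr ⟨h1, h2⟩)

lemma depA_TypeS {p q : Interval O} (hpq : relA p q) :
    DepA φ (TypeS σ φ p) (TypeS σ φ q) := by
  unfold DepA
  ext α
  simp only [Set.mem_union, mem_ReqA_TypeS, mem_Obs_TypeS, mem_ReqB_TypeS, mem_ReqBb_TypeS]
  constructor
  · rintro ⟨hcl, J, hrel, hs⟩
    have hJ : J.1.1 = q.1.1 := hrel.symm.trans hpq
    rcases lt_trichotomy J.1.2 q.1.2 with h | h | h
    · exact Or.inl (Or.inr ⟨hcl, J, ⟨hJ.symm, h⟩, hs⟩)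
    · exact Or.inl (Or.inl ⟨hcl, (interval_eq hJ h) ▸ hs⟩)
    · exact Or.inr ⟨hcl, J, ⟨hJ.symm, h⟩, hs⟩
  · rintro ((⟨hcl, hs⟩ | ⟨hcl, J, hrel, hs⟩) | ⟨hcl, J, hrel, hs⟩)
    · exact ⟨hcl, q, hpq, hs⟩
    · exact ⟨hcl, J, hpq.trans hrel.1, hs⟩
    · exact ⟨hcl, J, hpq.trans hrel.1, hs⟩

lemma depB_TypeS {p q : Interval O} (hpq : relB p q) :
    DepB φ (TypeS σ φ p) (TypeS σ φ q) := by
  obtain ⟨hx, hy⟩ := hpq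
  refine ⟨?_, ?_, ?_, ?_, ?_⟩
  · rintro α (hα | hα)
    · rw [mem_Obs_TypeS] at hα
      exact mem_ReqBb_TypeS.mpr ⟨hα.1, p, ⟨hx.symm, hy⟩, hα.2⟩
    · obtain ⟨hcl, J, ⟨h1, h2⟩, hs⟩ := mem_ReqBb_TypeS.mp hα
      exact mem_ReqBb_TypeS.mpr ⟨hcl, J, ⟨hx.symm.trans h1, hy.trans h2⟩, hs⟩
  · intro α hα
    obtain ⟨hcl, J, ⟨h1, h2⟩, hs⟩ := mem_ReqBb_TypeS.mp hα
    rcases lt_trichotomy J.1.2 p.1.2 with h | h | h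
    · exact Or.inr (mem_ReqB_TypeS.mpr ⟨hcl, J, ⟨hx.trans h1, h⟩, hs⟩)
    · exact Or.inl (Or.inl (mem_Obs_TypeS.mpr
        ⟨hcl, (interval_eq (h1.symm.trans hx.symm) h) ▸ hs⟩))
    · exact Or.inl (Or.inr (mem_ReqBb_TypeS.mpr ⟨hcl, J, ⟨hx.trans h1, h⟩, hs⟩))
  · rintro α (hα | hα)
    · rw [mem_Obs_TypeS] at hα
      exact mem_ReqB_TypeS.mpr ⟨hα.1, q, ⟨hx, hy⟩, hα.2⟩
    · obtain ⟨hcl, J, ⟨h1, h2⟩, hs⟩ := mem_ReqB_TypeS.mp hα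
      exact mem_ReqB_TypeS.mpr ⟨hcl, J, ⟨hx.trans h1, h2.trans hy⟩, hs⟩
  · intro α hα
    obtain ⟨hcl, J, ⟨h1, h2⟩, hs⟩ := mem_ReqB_TypeS.mp hα
    rcases lt_trichotomy J.1.2 q.1.2 with h | h | h
    · exact Or.inl (Or.inr (mem_ReqB_TypeS.mpr ⟨hcl, J, ⟨hx.symm.trans h1, h⟩, hs⟩))
    · exact Or.inl (Or.inl (mem_Obs_TypeS.mpr
        ⟨hcl, (interval_eq (h1.symm.trans hx) h) ▸ hs⟩))
    · exact Or.inr (mem_ReqBb_TypeS.mpr ⟨hcl, J, ⟨hx.symm.trans h1, h⟩, hs⟩)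
  · ext α
    simp only [mem_ReqLb_TypeS]
    constructor
    · rintro ⟨hcl, J, hrel, hs⟩
      exact ⟨hcl, J, hrel.trans_le hx.le, hs⟩
    · rintro ⟨hcl, J, hrel, hs⟩
      exact ⟨hcl, J, hrel.trans_le hx.ge, hs⟩

lemma depLb_TypeS {p q : Interval O} (hpq : relLb p q) :
    DepLb φ (TypeS σ φ p) (TypeS σ φ q) := by
  rintro α (hα | hα)
  · rw [mem_Obs_TypeS] at hα
    exact mem_ReqLb_TypeS.mpr ⟨hα.1, q, hpq, hα.2⟩
  · obtain ⟨hcl, J, hrel, hs⟩ := mem_ReqLb_TypeS.mp hα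
    exact mem_ReqLb_TypeS.mpr ⟨hcl, J, hrel.trans (q.2.trans hpq), hs⟩

lemma isCompass_TypeS (σ : Interval O → Set P) (φ : Formula P) :
    IsCompass φ (TypeS σ φ) where
  isAtom := fun p => isAtom_TypeS σ φ p
  consA := fun _ _ h => depA_TypeS h
  consB := fun _ _ h => depB_TypeS h
  consLb := fun _ _ h => depLb_TypeS h
  fulA := by
    intro p α hα
    obtain ⟨hcl, J, hrel, hs⟩ := mem_ReqA_TypeS.mp hα
    exact ⟨J, hrel, mem_Obs_TypeS.mpr ⟨hcl, hs⟩⟩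
  fulB := by
    intro p α hα
    obtain ⟨hcl, J, hrel, hs⟩ := mem_ReqB_TypeS.mp hα
    exact ⟨J, hrel, mem_Obs_TypeS.mpr ⟨hcl, hs⟩⟩
  fulBb := by
    intro p α hα
    obtain ⟨hcl, J, hrel, hs⟩ := mem_ReqBb_TypeS.mp hα
    exact ⟨J, hrel, mem_Obs_TypeS.mpr ⟨hcl, hs⟩⟩
  fulLb := by
    intro p α hα
    obtain ⟨hcl, J, hrel, hs⟩ := mem_ReqLb_TypeS.mp hα
    exact ⟨J, hrel, mem_Obs_TypeS.mpr ⟨hcl, hs⟩⟩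

/-! #### The truth lemma for compass structures -/

lemma truth_lemma {φ : Formula P} {L : Interval O → Set (Formula P)} (h : IsCompass φ L) :
    ∀ α, α ∈ Clp φ → ∀ I : Interval O,
      (sat (fun J => {a | Formula.atom a ∈ L J}) α I ↔ α ∈ L I) := by
  intro α
  induction α with
  | atom a => intro _ I; exact Iff.rfl
  | neg ψ ih =>
      intro hmem I
      have hψ : ψ ∈ Clp φ := neg_mem_Clp_elim hmem
      have hnc := (h.isAtom I).negCond (Formula.neg ψ) hmem
      rw [negc_neg] at hnc
      show (¬ sat _ ψ I) ↔ _
      rw [ih hψ I, hnc]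
  | or ψ χ ih1 ih2 =>
      intro hmem I
      obtain ⟨hψ, hχ⟩ := or_mem_Clp_elim hmem
      have hoc := (h.isAtom I).orCond ψ χ hmem
      show (sat _ ψ I ∨ sat _ χ I) ↔ _
      rw [ih1 hψ I, ih2 hχ I, hoc]
  | diaA ψ ih =>
      intro hmem I
      have hψ : ψ ∈ Cl φ := diaA_mem_Clp_elim hmem
      constructor
      · rintro ⟨J, hrel, hs⟩
        have hmemJ : ψ ∈ L J := (ih (Cl_subset_Clp φ hψ) J).mp hs
        have hr : ψ ∈ ReqA φ (L I) := by
          rw [h.consA I J hrel]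
          exact Set.mem_union_left _ (Set.mem_union_left _ ⟨hmemJ, hψ⟩)
        exact hr.2
      · intro hmem'
        obtain ⟨J, hrel, hobs⟩ := h.fulA I ψ ⟨hψ, hmem'⟩
        exact ⟨J, hrel, (ih (Cl_subset_Clp φ hψ) J).mpr hobs.1⟩
  | diaB ψ ih =>
      intro hmem I
      have hψ : ψ ∈ Cl φ := diaB_mem_Clp_elim hmem
      constructor
      · rintro ⟨J, hrel, hs⟩
        have hmemJ : ψ ∈ L J := (ih (Cl_subset_Clp φ hψ) J).mp hs
        have hr : ψ ∈ ReqB φ (L I) :=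
          (h.consB I J hrel).2.2.1 (Set.mem_union_left _ ⟨hmemJ, hψ⟩)
        exact hr.2
      · intro hmem'
        obtain ⟨J, hrel, hobs⟩ := h.fulB I ψ ⟨hψ, hmem'⟩
        exact ⟨J, hrel, (ih (Cl_subset_Clp φ hψ) J).mpr hobs.1⟩
  | diaBb ψ ih =>
      intro hmem I
      have hψ : ψ ∈ Cl φ := diaBb_mem_Clp_elim hmem
      constructor
      · rintro ⟨J, hrel, hs⟩
        have hmemJ : ψ ∈ L J := (ih (Cl_subset_Clp φ hψ) J).mp hs
        have hr : ψ ∈ ReqBb φ (L I) :=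
          (h.consB J I ⟨hrel.1.symm, hrel.2⟩).1 (Set.mem_union_left _ ⟨hmemJ, hψ⟩)
        exact hr.2
      · intro hmem'
        obtain ⟨J, hrel, hobs⟩ := h.fulBb I ψ ⟨hψ, hmem'⟩
        exact ⟨J, hrel, (ih (Cl_subset_Clp φ hψ) J).mpr hobs.1⟩
  | diaLb ψ ih =>
      intro hmem I
      have hψ : ψ ∈ Cl φ := diaLb_mem_Clp_elim hmem
      constructor
      · rintro ⟨J, hrel, hs⟩
        have hmemJ : ψ ∈ L J := (ih (Cl_subset_Clp φ hψ) J).mp hs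
        have hr : ψ ∈ ReqLb φ (L I) :=
          h.consLb I J hrel (Set.mem_union_left _ ⟨hmemJ, hψ⟩)
        exact hr.2
      · intro hmem'
        obtain ⟨J, hrel, hobs⟩ := h.fulLb I ψ ⟨hψ, hmem'⟩
        exact ⟨J, hrel, (ih (Cl_subset_Clp φ hψ) J).mpr hobs.1⟩

end Aux

/-- An ABB̄L̄-formula `φ` is satisfied by some interval structure
over a strongly discrete linear order iff it is featured by some (consistent and
fulfilling) compass `φ`-structure over a strongly discrete linear order. -/
theorem satisfiable_iff_featured {P : Type} (φ : Formula P) :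
    (∃ (O : Type) (_ : LinearOrder O), StronglyDiscrete O ∧
      ∃ (σ : Interval O → Set P) (I : Interval O), sat σ φ I) ↔
    (∃ (O : Type) (_ : LinearOrder O), StronglyDiscrete O ∧
      ∃ L : Interval O → Set (Formula P), IsCompass φ L ∧ ∃ p, φ ∈ L p) := by
  constructor
  · rintro ⟨O, instO, hsd, σ, I, hsat⟩
    exact ⟨O, instO, hsd, TypeS σ φ, isCompass_TypeS σ φ, I, phi_mem_Clp φ, hsat⟩
  · rintro ⟨O, instO, hsd, L, hc, p, hp⟩
    exact ⟨O, instO, hsd, fun J => {a | Formula.atom a ∈ L J}, p,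
      (truth_lemma hc φ (phi_mem_Clp φ) p).mpr hp⟩

end ABBL
end

section
/- For all φ-atoms F, G, H: if F →_A H and G →_B H, then F →_A G. -/
namespace ABBL

variable {P : Type}

variable {O : Type} [LinearOrder O]

/-- For all `φ`-atoms `F, G, H`: if `F →_A H` and `G →_B H`,
then `F →_A G`. -/
theorem depA_of_depA_of_depB {P : Type} (φ : Formula P) (F G H : Set (Formula P))
    (hF : IsAtom φ F) (hG : IsAtom φ G) (hH : IsAtom φ H)
    (h1 : DepA φ F H) (h2 : DepB φ G H) : DepA φ F G := by
  obtain ⟨a, b, c, d, -⟩ := h2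
  unfold DepA at h1 ⊢
  rw [h1]
  ext x
  have ha := @a x
  have hb := @b x
  have hc := @c x
  have hd := @d x
  simp only [Set.mem_union] at *
  tauto

end ABBL
end

section
/- The relation →_B on φ-atoms is transitive: for all φ-atoms F, G, H, if F →_B G and G →_B H, then F →_B H. -/
namespace ABBL

variable {P : Type}

variable {O : Type} [LinearOrder O]

/-- The relation `→_B` is transitive on `φ`-atoms. -/
theorem depB_trans {P : Type} (φ : Formula P) (F G H : Set (Formula P))
    (hF : IsAtom φ F) (hG : IsAtom φ G) (hH : IsAtom φ H)
    (h1 : DepB φ F G) (h2 : DepB φ G H) : DepB φ F H := by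
  obtain ⟨a1, b1, c1, d1, e1⟩ := h1
  obtain ⟨a2, b2, c2, d2, e2⟩ := h2
  refine ⟨?_, ?_, ?_, ?_, e1.trans e2⟩
  · exact fun x hx => a2 (Or.inr (a1 hx))
  · intro x hx
    rcases b2 hx with (hx | hx) | hx
    · exact Or.inr (c1 (Or.inl hx))
    · exact b1 hx
    · exact Or.inr (c1 (Or.inr hx))
  · exact fun x hx => c1 (Or.inr (c2 hx))
  · intro x hx
    rcases d1 hx with (hx | hx) | hx
    · exact Or.inr (a2 (Or.inl hx))
    · exact d2 hx
    · exact Or.inr (a2 (Or.inr hx))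

end ABBL
end

section
/- Let S be an interval structure over a strongly discrete linear order satisfying the ABB̄L̄-formula φ. For every pair of intervals I, J in S, if I B J then Type_S(I) →_B Type_S(J). -/
namespace ABBL

variable {P : Type}

variable {O : Type} [LinearOrder O]

/-- In an interval structure over a strongly discrete linear
order satisfying `φ`, `I B J` implies `Type_S(I) →_B Type_S(J)`. -/
theorem typeDep_B {P O : Type} [LinearOrder O] (hdisc : StronglyDiscrete O)
    (φ : Formula P) (σ : Interval O → Set P)
    (hsat : ∃ I : Interval O, sat σ φ I)
    (I J : Interval O) (hIJ : relB I J) :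
    DepB φ (TypeS σ φ I) (TypeS σ φ J) := by
  obtain ⟨hxx, hyy⟩ := hIJ
  have hClSub : Cl φ ⊆ Clp φ := Set.subset_union_left
  have hB : ∀ α ∈ Cl φ, Formula.diaB α ∈ Clp φ := fun α hα => Or.inr ⟨α, hα, by tauto⟩
  have hBb : ∀ α ∈ Cl φ, Formula.diaBb α ∈ Clp φ := fun α hα => Or.inr ⟨α, hα, by tauto⟩
  refine ⟨?_, ?_, ?_, ?_, ?_⟩
  · rintro α (⟨⟨hClp, hsatα⟩, hCl⟩ | ⟨hCl, ⟨_, hsatα⟩⟩)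
    · exact ⟨hCl, hBb α hCl, ⟨I, ⟨hxx.symm, hyy⟩, hsatα⟩⟩
    · obtain ⟨K, ⟨hK1, hK2⟩, hKsat⟩ := hsatα
      exact ⟨hCl, hBb α hCl, ⟨K, ⟨hxx.symm.trans hK1, hyy.trans hK2⟩, hKsat⟩⟩
  · rintro α ⟨hCl, _, K, ⟨hK1, hK2⟩, hKsat⟩
    rcases lt_trichotomy K.1.2 I.1.2 with h | h | h
    · exact Or.inr ⟨hCl, hB α hCl, ⟨K, ⟨hxx.trans hK1, h⟩, hKsat⟩⟩
    · have hKI : K = I := Subtype.ext (Prod.ext ((hxx.trans hK1).symm) h)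
      exact Or.inl (Or.inl ⟨⟨hClSub hCl, hKI ▸ hKsat⟩, hCl⟩)
    · exact Or.inl (Or.inr ⟨hCl, hBb α hCl, ⟨K, ⟨hxx.trans hK1, h⟩, hKsat⟩⟩)
  · rintro α (⟨⟨hClp, hsatα⟩, hCl⟩ | ⟨hCl, ⟨_, hsatα⟩⟩)
    · exact ⟨hCl, hB α hCl, ⟨J, ⟨hxx, hyy⟩, hsatα⟩⟩
    · obtain ⟨K, ⟨hK1, hK2⟩, hKsat⟩ := hsatα
      exact ⟨hCl, hB α hCl, ⟨K, ⟨hxx.trans hK1, hK2.trans hyy⟩, hKsat⟩⟩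
  · rintro α ⟨hCl, _, K, ⟨hK1, hK2⟩, hKsat⟩
    rcases lt_trichotomy K.1.2 J.1.2 with h | h | h
    · exact Or.inl (Or.inr ⟨hCl, hB α hCl, ⟨K, ⟨hxx.symm.trans hK1, h⟩, hKsat⟩⟩)
    · have hKJ : K = J := Subtype.ext (Prod.ext ((hxx.symm.trans hK1).symm) h)
      exact Or.inl (Or.inl ⟨⟨hClSub hCl, hKJ ▸ hKsat⟩, hCl⟩)
    · exact Or.inr ⟨hCl, hBb α hCl, ⟨K, ⟨hxx.symm.trans hK1, h⟩, hKsat⟩⟩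
  · ext α
    constructor
    · rintro ⟨hCl, _, K, hK, hKsat⟩
      exact ⟨hCl, Or.inr ⟨α, hCl, by tauto⟩, ⟨K, lt_of_lt_of_eq hK hxx, hKsat⟩⟩
    · rintro ⟨hCl, _, K, hK, hKsat⟩
      exact ⟨hCl, Or.inr ⟨α, hCl, by tauto⟩, ⟨K, lt_of_lt_of_eq hK hxx.symm, hKsat⟩⟩

end ABBL
end
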